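/- arXiv:2501.12132 — 2 statements merged into one kernel-verified Lean document; each statement's English description precedes it below -/
import Mathlib

section
/- Let S be a numerical semigroup with multiplicity m and Ŝ its Apéry saturation. Then Ŝ = S if and only if S is a MED numerical semigroup, and in all cases m(Ŝ) = m and S ⊆ Ŝ. -/
/-- A numerical semigroup: an additive submonoid of ℕ with finite complement. -/
structure NumSgp where
  carrier : Set ℕ
  zero_mem : 0 ∈ carrier
  add_mem : ∀ ⦃a b : ℕ⦄, a ∈ carrier → b ∈ carrier → a + b ∈ carrier
  cofinite : carrierᶜ.Finite

/-- The multiplicity: the smallest nonzero element. -/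
noncomputable def NumSgp.mult (S : NumSgp) : ℕ := sInf {n | n ∈ S.carrier ∧ n ≠ 0}

/-- The Apéry set of `S` with respect to `s`: elements `x ∈ S` with `x - s ∉ S`
(over the integers, i.e. there is no `y ∈ S` with `y + s = x`). -/
def NumSgp.Ap (S : NumSgp) (s : ℕ) : Set ℕ :=
  {x | x ∈ S.carrier ∧ ∀ y ∈ S.carrier, y + s ≠ x}

/-- `z` is an Arf element of `S`. -/
def NumSgp.ArfElem (S : NumSgp) (z : ℕ) : Prop :=
  ∀ x ∈ S.carrier, ∀ y ∈ S.carrier, z ≤ x → z ≤ y → x + y - z ∈ S.carrier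

/-- The minimal generating set: nonzero elements not expressible as a sum of two
nonzero elements of `S`. -/
def NumSgp.minGen (S : NumSgp) : Set ℕ :=
  {x | x ∈ S.carrier ∧ x ≠ 0 ∧ ∀ a ∈ S.carrier, ∀ b ∈ S.carrier, a ≠ 0 → b ≠ 0 → a + b ≠ x}

/-- The embedding dimension: the cardinality of the minimal generating set. -/
noncomputable def NumSgp.edim (S : NumSgp) : ℕ := S.minGen.ncard

/-- The Frobenius number: the largest gap. -/
noncomputable def NumSgp.frob (S : NumSgp) : ℕ := sSup S.carrierᶜ

/-- The conductor: the smallest `c` with `c + ℤ≥0 ⊆ S`. -/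
noncomputable def NumSgp.cond (S : NumSgp) : ℕ := sInf {c | ∀ n, c ≤ n → n ∈ S.carrier}

/-- The genus: the number of gaps. -/
noncomputable def NumSgp.genus (S : NumSgp) : ℕ := S.carrierᶜ.ncard

/-- The set of pseudo-Frobenius numbers. -/
def NumSgp.PF (S : NumSgp) : Set ℕ :=
  {x | x ∉ S.carrier ∧ ∀ s ∈ S.carrier, s ≠ 0 → x + s ∈ S.carrier}

/-- The type of `S`: the number of pseudo-Frobenius numbers. -/
noncomputable def NumSgp.type (S : NumSgp) : ℕ := S.PF.ncard

/-- `S` is a MED semigroup: its multiplicity is an Arf element, i.e. for all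
`x, y ∈ S` with `x, y ≥ m(S)`, `x + y - m(S) ∈ S`. -/
def NumSgp.IsMED (S : NumSgp) : Prop := S.ArfElem S.mult

/-- The MED closure of `S`: the intersection of all MED numerical semigroups
containing `S` with the same multiplicity. -/
def NumSgp.MEDclosure (S : NumSgp) : Set ℕ :=
  ⋂ T ∈ {T : NumSgp | S.carrier ⊆ T.carrier ∧ T.mult = S.mult ∧ T.IsMED}, T.carrier

/-- Multiplicity of a set of naturals. -/
noncomputable def multS (A : Set ℕ) : ℕ := sInf {n | n ∈ A ∧ n ≠ 0}

/-- The modified Apéry set `Âp(A, s)`: elements `x ∈ A` with `x - s` a gap of `A` or zero. -/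
def hAp (A : Set ℕ) (s : ℕ) : Set ℕ :=
  {x | x ∈ A ∧ ∃ d : ℕ, x = s + d ∧ (d ∉ A ∨ d = 0)}

/-- The Apéry saturation of `A`: the submonoid generated by `A` together with all
`a_k - m` for triples `a_i + a_j = a_k` of elements of `Âp(A, m)`, `m = m(A)`. -/
def ApSat (A : Set ℕ) : Set ℕ :=
  ↑(AddSubmonoid.closure (A ∪ {x : ℕ | ∃ ai ∈ hAp A (multS A), ∃ aj ∈ hAp A (multS A),
      ∃ ak ∈ hAp A (multS A), ai + aj = ak ∧ x + multS A = ak}))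

/-!
If `x - m ∈ S` then `x + y - m = (x - m) + y ∈ S`, so the Arf condition for the multiplicity `m`
only has to be checked on elements of `Âp(S, m)`; for two such elements `a, b`, either
`a + b - m ∈ S` already, or `a + b ∈ Âp(S, m)` and `a + b - m` is one of the new generators of `Ŝ`.
The new generators `a_i + a_j - m` are at least `m`, so `Ŝ` has no nonzero element below `m`.
-/

def apSatGen (A : Set ℕ) : Set ℕ :=
  {x : ℕ | ∃ ai ∈ hAp A (multS A), ∃ aj ∈ hAp A (multS A),
      ∃ ak ∈ hAp A (multS A), ai + aj = ak ∧ x + multS A = ak}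

theorem apSat_eq_closure (A : Set ℕ) :
    ApSat A = AddSubmonoid.closure (A ∪ apSatGen A) := rfl

theorem multS_eq {A : Set ℕ} {m : ℕ} (hm : m ∈ A) (hm0 : m ≠ 0)
    (hle : ∀ n ∈ A, n ≠ 0 → m ≤ n) : multS A = m :=
  le_antisymm (Nat.sInf_le ⟨hm, hm0⟩) (le_csInf ⟨m, hm, hm0⟩ fun n hn => hle n hn.1 hn.2)

theorem le_of_mem_hAp {A : Set ℕ} {s x : ℕ} (h : x ∈ hAp A s) : s ≤ x := by
  obtain ⟨d, rfl, _⟩ := h.2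
  exact Nat.le_add_right s d

theorem mem_hAp_of_sub_notMem {A : Set ℕ} {s x : ℕ} (hx : x ∈ A) (hsx : s ≤ x)
    (hd : x - s ∉ A) : x ∈ hAp A s :=
  ⟨hx, x - s, (Nat.add_sub_cancel' hsx).symm, Or.inl hd⟩

theorem sub_mem_of_notMem_hAp {A : Set ℕ} {s x : ℕ} (hx : x ∈ A) (hsx : s ≤ x)
    (h : x ∉ hAp A s) : x - s ∈ A :=
  not_not.mp fun hd => h (mem_hAp_of_sub_notMem hx hsx hd)

theorem le_of_ne_zero_of_mem_closure {T : Set ℕ} {m : ℕ} (hT : ∀ n ∈ T, n ≠ 0 → m ≤ n)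
    {n : ℕ} (hn : n ∈ AddSubmonoid.closure T) : n ≠ 0 → m ≤ n := by
  induction hn using AddSubmonoid.closure_induction with
  | mem x hx => exact hT x hx
  | zero => exact fun h => (h rfl).elim
  | add a b _ _ ha hb => omega

namespace NumSgp

variable (S : NumSgp)

def toAddSubmonoid : AddSubmonoid ℕ where
  carrier := S.carrier
  zero_mem' := S.zero_mem
  add_mem' := fun ha hb => S.add_mem ha hb

theorem exists_mem_ne_zero : ∃ n ∈ S.carrier, n ≠ 0 := by
  obtain ⟨n, hn⟩ := (S.cofinite.union (Set.finite_singleton 0)).infinite_compl.nonempty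
  simp only [Set.mem_compl_iff, Set.mem_union, Set.mem_singleton_iff, not_or, not_not] at hn
  exact ⟨n, hn⟩

theorem mult_mem_and_ne_zero : S.mult ∈ S.carrier ∧ S.mult ≠ 0 :=
  Nat.sInf_mem (s := {n | n ∈ S.carrier ∧ n ≠ 0}) S.exists_mem_ne_zero

theorem mult_le {n : ℕ} (hn : n ∈ S.carrier) (hn0 : n ≠ 0) : S.mult ≤ n :=
  Nat.sInf_le ⟨hn, hn0⟩

theorem multS_carrier : multS S.carrier = S.mult := rfl

theorem isMED_iff_forall_hAp :
    S.IsMED ↔ ∀ a ∈ hAp S.carrier S.mult, ∀ b ∈ hAp S.carrier S.mult,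
      a + b - S.mult ∈ S.carrier := by
  refine ⟨fun hmed a ha b hb => hmed a ha.1 b hb.1 (le_of_mem_hAp ha) (le_of_mem_hAp hb), ?_⟩
  intro h x hx y hy hmx hmy
  by_cases hxm : x - S.mult ∈ S.carrier
  · rw [Nat.sub_add_comm hmx]
    exact S.add_mem hxm hy
  by_cases hym : y - S.mult ∈ S.carrier
  · rw [Nat.add_sub_assoc hmy]
    exact S.add_mem hx hym
  exact h x (mem_hAp_of_sub_notMem hx hmx hxm) y (mem_hAp_of_sub_notMem hy hmy hym)

theorem apSatGen_subset_iff_isMED : apSatGen S.carrier ⊆ S.carrier ↔ S.IsMED := by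
  rw [isMED_iff_forall_hAp]
  constructor
  · intro hgen a ha b hb
    have hab : S.mult ≤ a + b := (le_of_mem_hAp ha).trans (Nat.le_add_right a b)
    by_cases habAp : a + b ∈ hAp S.carrier S.mult
    · exact hgen ⟨a, ha, b, hb, a + b, habAp, rfl, Nat.sub_add_cancel hab⟩
    · exact sub_mem_of_notMem_hAp (S.add_mem ha.1 hb.1) hab habAp
  · rintro h x ⟨a, ha, b, hb, c, -, rfl, hx⟩
    rw [multS_carrier] at ha hb hx
    simpa [← hx] using h a ha b hb

theorem subset_apSat : S.carrier ⊆ ApSat S.carrier :=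
  fun _ hx => AddSubmonoid.subset_closure (Or.inl hx)

theorem apSat_eq_iff_apSatGen_subset :
    ApSat S.carrier = S.carrier ↔ apSatGen S.carrier ⊆ S.carrier := by
  rw [apSat_eq_closure]
  constructor
  · intro h x hx
    rw [← h]
    exact AddSubmonoid.subset_closure (Or.inr hx)
  · intro h
    refine Set.Subset.antisymm ?_ S.subset_apSat
    exact AddSubmonoid.closure_le (S := S.toAddSubmonoid).mpr (Set.union_subset le_rfl h)

theorem multS_apSat : multS (ApSat S.carrier) = S.mult := by
  obtain ⟨hm, hm0⟩ := S.mult_mem_and_ne_zero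
  refine multS_eq (S.subset_apSat hm) hm0 fun n hn => le_of_ne_zero_of_mem_closure ?_ hn
  rintro x (hx | ⟨a, ha, b, hb, c, -, rfl, hx⟩) hx0
  · exact S.mult_le hx hx0
  · rw [multS_carrier] at ha hb hx
    have := le_of_mem_hAp ha
    have := le_of_mem_hAp hb
    omega

end NumSgp

theorem apsat_fixed_iff_med (S : NumSgp) :
    (ApSat S.carrier = S.carrier ↔ S.IsMED) ∧
    multS (ApSat S.carrier) = S.mult ∧ S.carrier ⊆ ApSat S.carrier :=
  ⟨S.apSat_eq_iff_apSatGen_subset.trans S.apSatGen_subset_iff_isMED, S.multS_apSat,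
    S.subset_apSat⟩
end

section
/- Let m, r_1, ..., r_p be positive integers with gcd(m, r_1, ..., r_p) = 1, and let S = ⟨m, m+r_1, ..., m+r_p⟩. Then the MED closure of S equals (m + ⟨m, r_1, ..., r_p⟩) ∪ {0}, i.e., the set consisting of 0 together with m plus any nonnegative integer combination of m, r_1, ..., r_p. -/
/-!
Write `T = ⟨m, r_1, …, r_p⟩`. The set `{0} ∪ (m + T)` is a numerical semigroup of multiplicity
`m` containing `S`, and it is MED because `(m + a) + (m + b) - m = m + (a + b)`. Conversely, in a
MED semigroup `U` of multiplicity `m` the shifts `{y | m + y ∈ U}` form a submonoid, so once it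
contains the generators `m` and `r_i` (as `2m, m + r_i ∈ S ⊆ U`) it contains all of `T`.
-/

namespace NumSgp

theorem mult_eq_of_forall_le {S : NumSgp} {m : ℕ} (hm : m ≠ 0) (hmS : m ∈ S.carrier)
    (hle : ∀ x ∈ S.carrier, x ≠ 0 → m ≤ x) : S.mult = m :=
  le_antisymm (Nat.sInf_le ⟨hmS, hm⟩) (le_csInf ⟨m, hmS, hm⟩ fun n hn => hle n hn.1 hn.2)

theorem mult_mem (S : NumSgp) : S.mult ∈ S.carrier := by
  have hinf : S.carrier.Infinite := by simpa using S.cofinite.infinite_compl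
  obtain ⟨n, hnS, hn⟩ := hinf.exists_gt 0
  exact (Nat.sInf_mem (s := {n | n ∈ S.carrier ∧ n ≠ 0}) ⟨n, hnS, hn.ne'⟩).1

def ArfElem.shiftSubmonoid {S : NumSgp} {z : ℕ} (h : S.ArfElem z) (hz : z ∈ S.carrier) :
    AddSubmonoid ℕ where
  carrier := {y | z + y ∈ S.carrier}
  zero_mem' := hz
  add_mem' {a b} ha hb := by
    have := h _ ha _ hb (Nat.le_add_right z a) (Nat.le_add_right z b)
    rwa [show z + a + (z + b) - z = z + (a + b) by omega] at this

theorem IsMED.mult_add_mem_of_mem_closure {S : NumSgp} (hS : S.IsMED) {s : Set ℕ}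
    (hs : ∀ y ∈ s, S.mult + y ∈ S.carrier) {y : ℕ} (hy : y ∈ AddSubmonoid.closure s) :
    S.mult + y ∈ S.carrier :=
  (AddSubmonoid.closure_le (S := ArfElem.shiftSubmonoid hS S.mult_mem)).2 hs hy

theorem zero_mem_MEDclosure (S : NumSgp) : 0 ∈ S.MEDclosure :=
  Set.mem_iInter₂.2 fun U _ => U.zero_mem

theorem mult_add_mem_MEDclosure {S : NumSgp} {s : Set ℕ} (hs : ∀ y ∈ s, S.mult + y ∈ S.carrier)
    {y : ℕ} (hy : y ∈ AddSubmonoid.closure s) : S.mult + y ∈ S.MEDclosure := by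
  refine Set.mem_iInter₂.2 fun U ⟨hSU, hUm, hUmed⟩ => ?_
  rw [← hUm] at hs ⊢
  exact hUmed.mult_add_mem_of_mem_closure (fun z hz => hSU (hs z hz)) hy

theorem MEDclosure_subset {S T : NumSgp} (hST : S.carrier ⊆ T.carrier) (hm : T.mult = S.mult)
    (hT : T.IsMED) : S.MEDclosure ⊆ T.carrier :=
  Set.biInter_subset_of_mem
    (s := {T : NumSgp | S.carrier ⊆ T.carrier ∧ T.mult = S.mult ∧ T.IsMED}) ⟨hST, hm, hT⟩

def ofAddSubmonoid (A : AddSubmonoid ℕ) (hA : (A : Set ℕ)ᶜ.Finite) : NumSgp where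
  carrier := A
  zero_mem := A.zero_mem
  add_mem _ _ := A.add_mem
  cofinite := hA

end NumSgp

namespace AddSubmonoid

def shiftUnionZero (T : AddSubmonoid ℕ) (m : ℕ) (hm : m ∈ T) : AddSubmonoid ℕ where
  carrier := {0} ∪ {x : ℕ | ∃ y ∈ T, x = m + y}
  zero_mem' := Or.inl rfl
  add_mem' {a b} := by
    rintro (rfl | ⟨y, hy, rfl⟩) hb
    · simpa using hb
    · rcases hb with rfl | ⟨z, hz, rfl⟩
      · exact Or.inr ⟨y, hy, rfl⟩
      · exact Or.inr ⟨y + (m + z), T.add_mem hy (T.add_mem hm hz), by omega⟩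

variable {T : AddSubmonoid ℕ} {m : ℕ} {hm : m ∈ T}

theorem add_mem_shiftUnionZero {y : ℕ} (hy : y ∈ T) : m + y ∈ T.shiftUnionZero m hm :=
  Or.inr ⟨y, hy, rfl⟩

theorem le_of_mem_shiftUnionZero {x : ℕ} (hx : x ∈ T.shiftUnionZero m hm) (hx0 : x ≠ 0) :
    m ≤ x := by
  rcases hx with rfl | ⟨y, -, rfl⟩
  · exact absurd rfl hx0
  · exact Nat.le_add_right m y

variable (hcof : (T.shiftUnionZero m hm : Set ℕ)ᶜ.Finite)
include hcof

theorem mult_ofAddSubmonoid_shiftUnionZero (hm0 : m ≠ 0) :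
    (NumSgp.ofAddSubmonoid _ hcof).mult = m :=
  NumSgp.mult_eq_of_forall_le hm0 (add_mem_shiftUnionZero T.zero_mem) fun _ hx hx0 =>
    le_of_mem_shiftUnionZero hx hx0

theorem isMED_ofAddSubmonoid_shiftUnionZero (hm0 : m ≠ 0) :
    (NumSgp.ofAddSubmonoid _ hcof).IsMED := by
  intro x hx y hy hmx hmy
  rw [mult_ofAddSubmonoid_shiftUnionZero hcof hm0] at hmx hmy ⊢
  obtain ⟨a, ha, rfl⟩ := hx.resolve_left (by rintro rfl; omega)
  obtain ⟨b, hb, rfl⟩ := hy.resolve_left (by rintro rfl; omega)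
  rw [show m + a + (m + b) - m = m + (a + b) by omega]
  exact add_mem_shiftUnionZero (T.add_mem ha hb)

end AddSubmonoid

theorem med_closure_formula_general (m p : ℕ) (r : Fin p → ℕ) (hm : 0 < m)
    (S : NumSgp)
    (hS : S.carrier = ↑(AddSubmonoid.closure ({m} ∪ Set.range (fun i => m + r i)))) :
    S.MEDclosure =
      {0} ∪ {x : ℕ | ∃ y ∈ AddSubmonoid.closure ({m} ∪ Set.range r), x = m + y} := by
  set T := AddSubmonoid.closure ({m} ∪ Set.range r)
  have hmT : m ∈ T := AddSubmonoid.subset_closure (Or.inl rfl)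
  have hmS : m ∈ S.carrier := hS ▸ AddSubmonoid.subset_closure (Or.inl rfl)
  have hmrS (i : Fin p) : m + r i ∈ S.carrier :=
    hS ▸ AddSubmonoid.subset_closure (Or.inr ⟨i, rfl⟩)
  have hSC : S.carrier ⊆ T.shiftUnionZero m hmT := by
    rw [hS]
    refine AddSubmonoid.closure_le.2 ?_
    rintro _ (rfl | ⟨i, rfl⟩)
    · exact AddSubmonoid.add_mem_shiftUnionZero T.zero_mem
    · exact AddSubmonoid.add_mem_shiftUnionZero (AddSubmonoid.subset_closure (Or.inr ⟨i, rfl⟩))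
  have hSmult : S.mult = m := NumSgp.mult_eq_of_forall_le hm.ne' hmS fun _ hx =>
    AddSubmonoid.le_of_mem_shiftUnionZero (hSC hx)
  have hcof := S.cofinite.subset (Set.compl_subset_compl.2 hSC)
  apply Set.Subset.antisymm
  · refine NumSgp.MEDclosure_subset hSC ?_
      (AddSubmonoid.isMED_ofAddSubmonoid_shiftUnionZero hcof hm.ne')
    rw [AddSubmonoid.mult_ofAddSubmonoid_shiftUnionZero hcof hm.ne', hSmult]
  · rintro _ (rfl | ⟨y, hy, rfl⟩)
    · exact S.zero_mem_MEDclosure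
    · have hgen : ∀ z ∈ ({m} ∪ Set.range r : Set ℕ), S.mult + z ∈ S.carrier := by
        rw [hSmult]
        rintro z (hz | ⟨i, rfl⟩)
        · rw [Set.mem_singleton_iff.1 hz]
          exact S.add_mem hmS hmS
        · exact hmrS i
      exact hSmult ▸ NumSgp.mult_add_mem_MEDclosure hgen hy

theorem med_closure_formula (m p : ℕ) (r : Fin p → ℕ) (hm : 0 < m)
    (hrpos : ∀ i, 0 < r i)
    (hgcd : Nat.gcd m (Finset.univ.gcd r) = 1)
    (S : NumSgp)
    (hS : S.carrier = ↑(AddSubmonoid.closure ({m} ∪ Set.range (fun i => m + r i)))) :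
    S.MEDclosure =
      {0} ∪ {x : ℕ | ∃ y ∈ AddSubmonoid.closure ({m} ∪ Set.range r), x = m + y} :=
  med_closure_formula_general m p r hm S hS
end
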